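/- arXiv:1802.08416 — 2 statements merged into one kernel-verified Lean document; each statement's English description precedes it below -/
import Mathlib

section
/- Let B be a canonical Blaschke product of degree 3 with zeros 0, a_1, a_2 in the open unit disk. If z_1 ≠ z_2 lie on the unit circle and B(z_1) = B(z_2), then the line through z_1 and z_2 is tangent to the ellipse E defined by |z - a_1| + |z - a_2| = |1 - conj(a_1) a_2|. -/
open Complex ComplexConjugate

/-!
Let `a₁*` be the mirror image of `a₁` in the line `L` through `z₁, z₂`. For `w ∈ L`,
`|w - a₁| + |w - a₂| = |w - a₁*| + |w - a₂| ≥ |a₁* - a₂|`, with equality where the segment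
`[a₁*, a₂]` crosses `L`; it does cross `L`, because `|a₁ - a₂| < |1 - ā₁ a₂|` forbids `a₁, a₂`
from lying strictly on opposite sides of `L`. So everything reduces to `|a₁* - a₂| = |1 - ā₁ a₂|`.

For a chord of the unit circle `a₁* = z₁ + z₂ - z₁ z₂ ā₁`. If `μ = B(z₁) = B(z₂)`, the equation
`B(z) = μ` is a monic cubic with constant term `-μ`, so by Vieta its third root is
`z₃ = μ z̄₁ z̄₂`, again on the circle, and `z₁ + z₂ = a₁ + a₂ + μ ā₁ ā₂ - z₃`. This yields
`(a₁* - a₂)(1 - ā₁ z₃) = (a₁ - z₃)(1 - ā₁ a₂)`, and `|z₃ - a₁| = |1 - ā₁ z₃|` on the circle.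
-/

theorem cubic_third_root {K : Type*} [Field K] {c₀ c₁ c₂ x y z : K} (hxy : x ≠ y) (hc₀ : c₀ ≠ 0)
    (hx : x ^ 3 + c₂ * x ^ 2 + c₁ * x + c₀ = 0) (hy : y ^ 3 + c₂ * y ^ 2 + c₁ * y + c₀ = 0)
    (hxyz : x * y * z = -c₀) :
    x + y + z = -c₂ ∧ z ^ 3 + c₂ * z ^ 2 + c₁ * z + c₀ = 0 := by
  have hxy₀ : x * y ≠ 0 := left_ne_zero_of_mul (hxyz ▸ neg_ne_zero.mpr hc₀)
  have hsub : x - y ≠ 0 := sub_ne_zero.mpr hxy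
  have hsum : x + y + z = -c₂ := by
    have h : (x - y) * (x * y) * (x + y + z + c₂) = 0 := by
      linear_combination y * hx - x * hy + (x - y) * hxyz
    linear_combination (mul_eq_zero.mp h).resolve_left (mul_ne_zero hsub hxy₀)
  have hc₁ : x ^ 2 + x * y + y ^ 2 + c₂ * (x + y) + c₁ = 0 := by
    have h : (x - y) * (x ^ 2 + x * y + y ^ 2 + c₂ * (x + y) + c₁) = 0 := by
      linear_combination hx - hy
    exact (mul_eq_zero.mp h).resolve_left hsub
  exact ⟨hsum, by linear_combination z * hc₁ + z * (z - x - y) * hsum + hxyz⟩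

section Line

/-- Its imaginary part is the signed distance from `w` to the line `pq`, scaled by `1 / |q - p|`. -/
noncomputable def lineCoord (p q w : ℂ) : ℂ := (w - p) / (q - p)

def lineThrough (p q : ℂ) : Set ℂ := {z | ∃ t : ℝ, z = (1 - t) * p + t * q}

noncomputable def lineReflection (p q w : ℂ) : ℂ := p + (q - p) * conj (lineCoord p q w)

variable {p q : ℂ}

theorem add_mul_lineCoord (hpq : p ≠ q) (w : ℂ) : p + (q - p) * lineCoord p q w = w := by
  rw [lineCoord, mul_div_cancel₀ _ (sub_ne_zero.mpr hpq.symm)]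
  ring

theorem mem_lineThrough_iff (hpq : p ≠ q) {w : ℂ} :
    w ∈ lineThrough p q ↔ (lineCoord p q w).im = 0 := by
  have hqp : q - p ≠ 0 := sub_ne_zero.mpr hpq.symm
  constructor
  · rintro ⟨t, rfl⟩
    rw [lineCoord, show (1 - (t : ℂ)) * p + t * q - p = t * (q - p) by ring,
      mul_div_cancel_right₀ _ hqp, ofReal_im]
  · intro h
    refine ⟨(lineCoord p q w).re, ?_⟩
    rw [conj_eq_iff_re.mp (conj_eq_iff_im.mpr h)]
    conv_lhs => rw [← add_mul_lineCoord hpq w]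
    ring

theorem lineCoord_lineReflection (hpq : p ≠ q) (w : ℂ) :
    lineCoord p q (lineReflection p q w) = conj (lineCoord p q w) := by
  rw [lineCoord, lineReflection, add_sub_cancel_left,
    mul_div_cancel_left₀ _ (sub_ne_zero.mpr hpq.symm)]

theorem norm_lineReflection_sub (hpq : p ≠ q) {u : ℂ} (hu : u ∈ lineThrough p q) (w : ℂ) :
    ‖lineReflection p q w - u‖ = ‖w - u‖ := by
  have hu' : conj (lineCoord p q u) = lineCoord p q u :=
    conj_eq_iff_im.mpr ((mem_lineThrough_iff hpq).mp hu)
  have hσ : lineReflection p q w - u = (q - p) * conj (lineCoord p q w - lineCoord p q u) := by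
    rw [map_sub, hu', lineReflection]
    conv_lhs => rw [← add_mul_lineCoord hpq u]
    ring
  have hw : w - u = (q - p) * (lineCoord p q w - lineCoord p q u) := by
    conv_lhs => rw [← add_mul_lineCoord hpq w, ← add_mul_lineCoord hpq u]
    ring
  rw [hσ, hw, norm_mul, norm_mul, norm_conj]

theorem exists_mem_lineThrough_mem_segment (hpq : p ≠ q) {x y : ℂ}
    (h : (lineCoord p q x).im * (lineCoord p q y).im ≤ 0) :
    ∃ u ∈ lineThrough p q, u ∈ segment ℝ x y := by
  set g : ℂ → ℝ := fun w => (lineCoord p q w).im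
  have hg : Continuous g := by unfold g lineCoord; fun_prop
  have h₀ : (0 : ℝ) ∈ Set.uIcc (g x) (g y) := by
    rw [Set.mem_uIcc]
    rcases mul_nonpos_iff.mp h with ⟨h₁, h₂⟩ | ⟨h₁, h₂⟩
    · exact Or.inr ⟨h₂, h₁⟩
    · exact Or.inl ⟨h₁, h₂⟩
  have hconn := isPreconnected_iff_ordConnected.mp
    ((convex_segment x y).isPreconnected.image g hg.continuousOn)
  obtain ⟨u, hu, hgu⟩ := hconn.uIcc_subset (Set.mem_image_of_mem g (left_mem_segment ℝ x y))
    (Set.mem_image_of_mem g (right_mem_segment ℝ x y)) h₀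
  exact ⟨u, (mem_lineThrough_iff hpq).mpr hgu, hu⟩

theorem norm_lineReflection_sub_le (hpq : p ≠ q) {u : ℂ} (hu : u ∈ lineThrough p q) (a b : ℂ) :
    ‖lineReflection p q a - b‖ ≤ ‖u - a‖ + ‖u - b‖ := by
  calc ‖lineReflection p q a - b‖ ≤ ‖lineReflection p q a - u‖ + ‖u - b‖ :=
        norm_sub_le_norm_sub_add_norm_sub _ _ _
    _ = ‖u - a‖ + ‖u - b‖ := by rw [norm_lineReflection_sub hpq hu, norm_sub_rev]

theorem exists_mem_lineThrough_norm_add_norm_eq (hpq : p ≠ q) {a b : ℂ}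
    (hab : ‖a - b‖ < ‖lineReflection p q a - b‖) :
    ∃ u ∈ lineThrough p q, ‖u - a‖ + ‖u - b‖ = ‖lineReflection p q a - b‖ := by
  by_cases hside : (lineCoord p q a).im * (lineCoord p q b).im ≤ 0
  · obtain ⟨u, hu, hseg⟩ := exists_mem_lineThrough_mem_segment hpq hside
    have hsum := dist_add_dist_of_mem_segment hseg
    rw [dist_eq_norm, dist_eq_norm, dist_eq_norm, norm_sub_rev a u] at hsum
    linarith [norm_lineReflection_sub_le hpq hu a b]
  · have hside' : (lineCoord p q (lineReflection p q a)).im * (lineCoord p q b).im ≤ 0 := by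
      rw [lineCoord_lineReflection hpq, conj_im, neg_mul]
      linarith
    obtain ⟨u, hu, hseg⟩ := exists_mem_lineThrough_mem_segment hpq hside'
    refine ⟨u, hu, ?_⟩
    have hsum := dist_add_dist_of_mem_segment hseg
    rw [dist_eq_norm, dist_eq_norm, dist_eq_norm, norm_lineReflection_sub hpq hu,
      norm_sub_rev a u] at hsum
    exact hsum

theorem lineReflection_eq_of_norm_eq_one (hp : ‖p‖ = 1) (hq : ‖q‖ = 1) (hpq : p ≠ q) (w : ℂ) :
    lineReflection p q w = p + q - p * q * conj w := by
  have hp₀ : p ≠ 0 := norm_ne_zero_iff.mp (by rw [hp]; exact one_ne_zero)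
  have hq₀ : q ≠ 0 := norm_ne_zero_iff.mp (by rw [hq]; exact one_ne_zero)
  have hqp : q⁻¹ - p⁻¹ ≠ 0 := sub_ne_zero.mpr (inv_injective.ne hpq.symm)
  rw [lineReflection, lineCoord, map_div₀, map_sub, map_sub, ← inv_eq_conj hp, ← inv_eq_conj hq]
  field_simp
  ring

end Line

section Blaschke

noncomputable def blaschke3 (a₁ a₂ z : ℂ) : ℂ :=
  z * ((z - a₁) / (1 - conj a₁ * z)) * ((z - a₂) / (1 - conj a₂ * z))

variable {a a₁ a₂ z : ℂ}

theorem mul_conj_eq_one (hz : ‖z‖ = 1) : z * conj z = 1 := by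
  rw [mul_conj', hz]
  norm_num

theorem one_sub_conj_mul_ne_zero (ha : ‖a‖ < 1) (hz : ‖z‖ = 1) : 1 - conj a * z ≠ 0 := by
  intro h
  have h' := congrArg norm (sub_eq_zero.mp h)
  rw [norm_one, norm_mul, norm_conj, hz, mul_one] at h'
  linarith

theorem norm_sub_eq_norm_one_sub_conj_mul (hz : ‖z‖ = 1) (a : ℂ) :
    ‖z - a‖ = ‖1 - conj a * z‖ := by
  have h : 1 - conj a * z = z * conj (z - a) := by
    rw [map_sub, mul_sub, mul_conj_eq_one hz]
    ring
  rw [h, norm_mul, norm_conj, hz, one_mul]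

theorem norm_sub_lt_norm_one_sub_conj_mul (ha₁ : ‖a₁‖ < 1) (ha₂ : ‖a₂‖ < 1) :
    ‖a₁ - a₂‖ < ‖1 - conj a₁ * a₂‖ := by
  have h : ‖1 - conj a₁ * a₂‖ ^ 2 = ‖a₁ - a₂‖ ^ 2 + (1 - ‖a₁‖ ^ 2) * (1 - ‖a₂‖ ^ 2) := by
    simp only [Complex.sq_norm, normSq_apply, sub_re, sub_im, mul_re, mul_im, conj_re, conj_im,
      one_re, one_im]
    ring
  have hpos : 0 < (1 - ‖a₁‖ ^ 2) * (1 - ‖a₂‖ ^ 2) := by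
    apply mul_pos <;> nlinarith [norm_nonneg a₁, norm_nonneg a₂]
  exact lt_of_pow_lt_pow_left₀ 2 (norm_nonneg _) (by linarith)

theorem norm_blaschke3 (ha₁ : ‖a₁‖ < 1) (ha₂ : ‖a₂‖ < 1) (hz : ‖z‖ = 1) :
    ‖blaschke3 a₁ a₂ z‖ = 1 := by
  have hnorm (a : ℂ) (ha : ‖a‖ < 1) : ‖z - a‖ / ‖1 - conj a * z‖ = 1 := by
    rw [norm_sub_eq_norm_one_sub_conj_mul hz,
      div_self (norm_ne_zero_iff.mpr (one_sub_conj_mul_ne_zero ha hz))]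
  rw [blaschke3, norm_mul, norm_mul, norm_div, norm_div, hz, hnorm a₁ ha₁, hnorm a₂ ha₂]
  norm_num

theorem blaschke3_mul (h₁ : 1 - conj a₁ * z ≠ 0) (h₂ : 1 - conj a₂ * z ≠ 0) :
    blaschke3 a₁ a₂ z * ((1 - conj a₁ * z) * (1 - conj a₂ * z)) = z * (z - a₁) * (z - a₂) := by
  calc blaschke3 a₁ a₂ z * ((1 - conj a₁ * z) * (1 - conj a₂ * z))
      = z * ((z - a₁) / (1 - conj a₁ * z) * (1 - conj a₁ * z)) *
          ((z - a₂) / (1 - conj a₂ * z) * (1 - conj a₂ * z)) := by rw [blaschke3]; ring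
    _ = z * (z - a₁) * (z - a₂) := by rw [div_mul_cancel₀ _ h₁, div_mul_cancel₀ _ h₂]

theorem norm_chord_reflection_sub_eq {z₁ z₂ : ℂ} (hz₁ : ‖z₁‖ = 1) (hz₂ : ‖z₂‖ = 1)
    (hne : z₁ ≠ z₂) (ha₁ : ‖a₁‖ < 1) (ha₂ : ‖a₂‖ < 1)
    (heq : blaschke3 a₁ a₂ z₁ = blaschke3 a₁ a₂ z₂) :
    ‖z₁ + z₂ - z₁ * z₂ * conj a₁ - a₂‖ = ‖1 - conj a₁ * a₂‖ := by
  set μ := blaschke3 a₁ a₂ z₁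
  have hμ : μ ≠ 0 := norm_ne_zero_iff.mp (by rw [norm_blaschke3 ha₁ ha₂ hz₁]; exact one_ne_zero)
  have hcubic {z : ℂ} (hz : ‖z‖ = 1) (hBz : blaschke3 a₁ a₂ z = μ) :
      z ^ 3 + -(a₁ + a₂ + μ * conj a₁ * conj a₂) * z ^ 2 +
        (a₁ * a₂ + μ * (conj a₁ + conj a₂)) * z + -μ = 0 := by
    have h := blaschke3_mul (one_sub_conj_mul_ne_zero ha₁ hz) (one_sub_conj_mul_ne_zero ha₂ hz)
    rw [hBz] at h
    linear_combination -h
  set z₃ := μ * conj z₁ * conj z₂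
  have hz₃ : ‖z₃‖ = 1 := by
    rw [norm_mul, norm_mul, norm_conj, norm_conj, norm_blaschke3 ha₁ ha₂ hz₁, hz₁, hz₂]
    norm_num
  have hprod : z₁ * z₂ * z₃ = μ := by
    linear_combination μ * z₂ * conj z₂ * mul_conj_eq_one hz₁ + μ * mul_conj_eq_one hz₂
  obtain ⟨hsum, hroot⟩ := cubic_third_root hne (neg_ne_zero.mpr hμ) (hcubic hz₁ rfl)
    (hcubic hz₂ heq.symm) (by rw [neg_neg]; exact hprod)
  have h₃ := mul_conj_eq_one hz₃
  have hz₁z₂ : z₁ * z₂ = μ * conj z₃ := by linear_combination conj z₃ * hprod - z₁ * z₂ * h₃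
  have hfac : (z₃ - a₁) * (z₃ - a₂) = μ * (conj z₃ - conj a₂) * (1 - conj a₁ * z₃) := by
    linear_combination conj z₃ * hroot -
      ((z₃ - a₁) * (z₃ - a₂) + μ * conj a₂ * (1 - conj a₁ * z₃)) * h₃
  have key : (z₁ + z₂ - z₁ * z₂ * conj a₁ - a₂) * (1 - conj a₁ * z₃) =
      (a₁ - z₃) * (1 - conj a₁ * a₂) := by
    linear_combination (1 - conj a₁ * z₃) * hsum - conj a₁ * (1 - conj a₁ * z₃) * hz₁z₂ +
      conj a₁ * hfac
  have hnorm := congrArg norm key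
  rw [norm_mul, norm_mul, norm_sub_rev a₁, norm_sub_eq_norm_one_sub_conj_mul hz₃, mul_comm] at hnorm
  exact mul_left_cancel₀ (norm_ne_zero_iff.mpr (one_sub_conj_mul_ne_zero ha₁ hz₃)) hnorm

end Blaschke

theorem blaschke_deg3_chord_tangent_ellipse (a₁ a₂ : ℂ)
    (ha₁ : ‖a₁‖ < 1) (ha₂ : ‖a₂‖ < 1)
    (B : ℂ → ℂ)
    (hB : ∀ z, B z = z * ((z - a₁) / (1 - (starRingEnd ℂ) a₁ * z)) *
      ((z - a₂) / (1 - (starRingEnd ℂ) a₂ * z)))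
    (z₁ z₂ : ℂ) (hz₁ : ‖z₁‖ = 1) (hz₂ : ‖z₂‖ = 1)
    (hne : z₁ ≠ z₂) (heq : B z₁ = B z₂)
    (L : Set ℂ) (hL : L = {z : ℂ | ∃ t : ℝ, z = (1 - (t : ℂ)) * z₁ + (t : ℂ) * z₂}) :
    (∃ w ∈ L, ‖w - a₁‖ + ‖w - a₂‖ =
        ‖1 - (starRingEnd ℂ) a₁ * a₂‖) ∧
    ∀ w ∈ L, ‖w - a₁‖ + ‖w - a₂‖ ≥
        ‖1 - (starRingEnd ℂ) a₁ * a₂‖ := by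
  subst hL
  obtain rfl : B = blaschke3 a₁ a₂ := funext hB
  have hσ : ‖lineReflection z₁ z₂ a₁ - a₂‖ = ‖1 - conj a₁ * a₂‖ := by
    rw [lineReflection_eq_of_norm_eq_one hz₁ hz₂ hne]
    exact norm_chord_reflection_sub_eq hz₁ hz₂ hne ha₁ ha₂ heq
  refine ⟨?_, fun w hw => ?_⟩
  · rw [← hσ]
    exact exists_mem_lineThrough_norm_add_norm_eq hne
      (hσ ▸ norm_sub_lt_norm_one_sub_conj_mul ha₁ ha₂)
  · rw [← hσ]
    exact norm_lineReflection_sub_le hne hw a₁ a₂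
end

section
/- For 0 < a, b < 1 with a³b³ − 2a²b² − (a² + b²) + 3ab = 0, the Blaschke product B(z) = z·(z² − a)/(1 − a z²)·(z² − b)/(1 − b z²) has the property that whenever z_1 ≠ z_2 on the unit circle satisfy B(z_1) = B(z_2) and z_1 + z_2 ≠ 0, the intersection point z = x + iy = 2z_1z_2/(z_1+z_2) of the tangent lines at z_1, z_2 satisfies (a(b+1)²x² + a(b−1)²y² − 4b)·((a²b³ − ab² + 2b² + 3b − a)x² + (a²b³ − ab² − 2b² + 3b − a)y² − 4b) = 0. -/
/-!
Clearing denominators in `B z₁ = B z₂` and dividing by `z₁ - z₂` leaves a polynomial relation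
`G(s, p) = 0` in `s = z₁ + z₂` and `p = z₁ z₂`. Since `conj zᵢ = zᵢ⁻¹` on the unit circle, the
tangent intersection `z = x + iy` satisfies `x s = p + 1` and `i y s = p - 1`, so each quadric
factor, multiplied by `s²`, becomes a polynomial in `s, p`. Their product is
`16 b² G + 16 p (p + b)(1 + b p) (a³b³ − 2a²b² − a² − b² + 3ab)`, which vanishes.
-/

open Complex ComplexConjugate

noncomputable def blaschke (a b z : ℂ) : ℂ :=
  z * ((z ^ 2 - a) / (1 - a * z ^ 2)) * ((z ^ 2 - b) / (1 - b * z ^ 2))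

def collisionPoly (a b s p : ℂ) : ℂ :=
  s ^ 4 - s ^ 2 * ((a + b) * (1 + p ^ 2) + (3 + a ^ 2 * b ^ 2) * p)
    + a * b * (1 + p ^ 2) ^ 2 + (a + b) * (1 + a * b) * p * (1 + p ^ 2)
    + (1 + a ^ 2) * (1 + b ^ 2) * p ^ 2

theorem blaschke_cross_sub (a b z₁ z₂ : ℂ) :
    z₁ * (z₁ ^ 2 - a) * (z₁ ^ 2 - b) * ((1 - a * z₂ ^ 2) * (1 - b * z₂ ^ 2))
      - z₂ * (z₂ ^ 2 - a) * (z₂ ^ 2 - b) * ((1 - a * z₁ ^ 2) * (1 - b * z₁ ^ 2))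
      = (z₁ - z₂) * collisionPoly a b (z₁ + z₂) (z₁ * z₂) := by
  unfold collisionPoly
  ring

theorem one_sub_mul_sq_ne_zero {c w : ℂ} (hc : ‖c‖ < 1) (hw : ‖w‖ = 1) :
    1 - c * w ^ 2 ≠ 0 := by
  intro h
  have : ‖c * w ^ 2‖ = 1 := by rw [← sub_eq_zero.mp h, norm_one]
  rw [norm_mul, norm_pow, hw, one_pow, mul_one] at this
  exact hc.ne this

theorem collisionPoly_eq_zero_of_blaschke_eq {a b z₁ z₂ : ℂ} (ha : ‖a‖ < 1) (hb : ‖b‖ < 1)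
    (hz₁ : ‖z₁‖ = 1) (hz₂ : ‖z₂‖ = 1) (hne : z₁ ≠ z₂)
    (heq : blaschke a b z₁ = blaschke a b z₂) :
    collisionPoly a b (z₁ + z₂) (z₁ * z₂) = 0 := by
  have hd₁ := mul_ne_zero (one_sub_mul_sq_ne_zero ha hz₁) (one_sub_mul_sq_ne_zero hb hz₁)
  have hd₂ := mul_ne_zero (one_sub_mul_sq_ne_zero ha hz₂) (one_sub_mul_sq_ne_zero hb hz₂)
  have hcross : (z₁ - z₂) * collisionPoly a b (z₁ + z₂) (z₁ * z₂) = 0 := by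
    rw [← blaschke_cross_sub, sub_eq_zero]
    unfold blaschke at heq
    rw [mul_assoc z₁, div_mul_div_comm, mul_assoc z₂, div_mul_div_comm, ← mul_div_assoc,
      ← mul_div_assoc, div_eq_div_iff hd₁ hd₂] at heq
    linear_combination heq
  exact (mul_eq_zero.mp hcross).resolve_left (sub_ne_zero.mpr hne)

section TangentIntersection

variable {z₁ z₂ : ℂ}

theorem conj_div_sum_mul_sum (hz₁ : ‖z₁‖ = 1) (hz₂ : ‖z₂‖ = 1) (hsum : z₁ + z₂ ≠ 0) : conj (2 * z₁ * z₂ / (z₁ + z₂)) * (z₁ + z₂) = 2 := by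
  have hz₁0 : z₁ ≠ 0 := norm_ne_zero_iff.mp (by simp [hz₁])
  have hz₂0 : z₂ ≠ 0 := norm_ne_zero_iff.mp (by simp [hz₂])
  rw [map_div₀, map_mul, map_mul, map_add, map_ofNat, ← inv_eq_conj hz₁, ← inv_eq_conj hz₂]
  have hinv : z₁⁻¹ + z₂⁻¹ = (z₁ + z₂) / (z₁ * z₂) := by field_simp; ring
  rw [hinv]
  field_simp

theorem re_div_sum_mul_sum (hz₁ : ‖z₁‖ = 1) (hz₂ : ‖z₂‖ = 1) (hsum : z₁ + z₂ ≠ 0) :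
    ((2 * z₁ * z₂ / (z₁ + z₂)).re : ℂ) * (z₁ + z₂) = z₁ * z₂ + 1 := by
  have h := add_conj (2 * z₁ * z₂ / (z₁ + z₂))
  push_cast at h
  linear_combination (-(z₁ + z₂) / 2) * h + div_mul_cancel₀ (2 * z₁ * z₂) hsum / 2
    + conj_div_sum_mul_sum hz₁ hz₂ hsum / 2

theorem im_div_sum_mul_I_mul_sum (hz₁ : ‖z₁‖ = 1) (hz₂ : ‖z₂‖ = 1)
    (hsum : z₁ + z₂ ≠ 0) :
    ((2 * z₁ * z₂ / (z₁ + z₂)).im : ℂ) * I * (z₁ + z₂) = z₁ * z₂ - 1 := by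
  have h := sub_conj (2 * z₁ * z₂ / (z₁ + z₂))
  push_cast at h
  linear_combination (-(z₁ + z₂) / 2) * h + div_mul_cancel₀ (2 * z₁ * z₂) hsum / 2
    - conj_div_sum_mul_sum hz₁ hz₂ hsum / 2

end TangentIntersection

theorem two_ellipses_mul_pow_four_eq_zero {a b s p X Y : ℂ} (hX : X * s = p + 1)
    (hY : Y * I * s = p - 1)
    (hab : a ^ 3 * b ^ 3 - 2 * a ^ 2 * b ^ 2 - (a ^ 2 + b ^ 2) + 3 * a * b = 0)
    (hG : collisionPoly a b s p = 0) :
    (a * (b + 1) ^ 2 * X ^ 2 + a * (b - 1) ^ 2 * Y ^ 2 - 4 * b) *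
      ((a ^ 2 * b ^ 3 - a * b ^ 2 + 2 * b ^ 2 + 3 * b - a) * X ^ 2 +
       (a ^ 2 * b ^ 3 - a * b ^ 2 - 2 * b ^ 2 + 3 * b - a) * Y ^ 2 - 4 * b) * s ^ 4 = 0 := by
  have hX2 : X ^ 2 * s ^ 2 = (p + 1) ^ 2 := by linear_combination (X * s + p + 1) * hX
  have hY2 : Y ^ 2 * s ^ 2 = -(p - 1) ^ 2 := by
    linear_combination (-(Y * I * s + p - 1)) * hY + Y ^ 2 * s ^ 2 * I_sq
  set cp := a ^ 2 * b ^ 3 - a * b ^ 2 + 2 * b ^ 2 + 3 * b - a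
  set cm := a ^ 2 * b ^ 3 - a * b ^ 2 - 2 * b ^ 2 + 3 * b - a
  have h₁ : (a * (b + 1) ^ 2 * X ^ 2 + a * (b - 1) ^ 2 * Y ^ 2 - 4 * b) * s ^ 2
      = a * (b + 1) ^ 2 * (p + 1) ^ 2 - a * (b - 1) ^ 2 * (p - 1) ^ 2 - 4 * b * s ^ 2 := by
    linear_combination a * (b + 1) ^ 2 * hX2 + a * (b - 1) ^ 2 * hY2
  have h₂ : (cp * X ^ 2 + cm * Y ^ 2 - 4 * b) * s ^ 2
      = cp * (p + 1) ^ 2 - cm * (p - 1) ^ 2 - 4 * b * s ^ 2 := by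
    linear_combination cp * hX2 + cm * hY2
  unfold collisionPoly at hG
  linear_combination (cp * X ^ 2 + cm * Y ^ 2 - 4 * b) * s ^ 2 * h₁
    + (a * (b + 1) ^ 2 * (p + 1) ^ 2 - a * (b - 1) ^ 2 * (p - 1) ^ 2 - 4 * b * s ^ 2) * h₂
    + 16 * b ^ 2 * hG + 16 * p * (p + b) * (1 + b * p) * hab

theorem exterior_curve_two_ellipses (a b : ℝ)
    (ha : 0 < a) (ha' : a < 1) (hb : 0 < b) (hb' : b < 1)
    (hab : a ^ 3 * b ^ 3 - 2 * a ^ 2 * b ^ 2 - (a ^ 2 + b ^ 2) + 3 * a * b = 0)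
    (B : ℂ → ℂ)
    (hB : ∀ z, B z = z * ((z ^ 2 - (a : ℂ)) / (1 - (a : ℂ) * z ^ 2)) *
      ((z ^ 2 - (b : ℂ)) / (1 - (b : ℂ) * z ^ 2)))
    (z₁ z₂ : ℂ) (hz₁ : ‖z₁‖ = 1) (hz₂ : ‖z₂‖ = 1)
    (hne : z₁ ≠ z₂) (hsum : z₁ + z₂ ≠ 0) (heq : B z₁ = B z₂)
    (z : ℂ) (hz : z = 2 * z₁ * z₂ / (z₁ + z₂)) (x y : ℝ)
    (hx : x = z.re) (hy : y = z.im) :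
    (a * (b + 1) ^ 2 * x ^ 2 + a * (b - 1) ^ 2 * y ^ 2 - 4 * b) *
      ((a ^ 2 * b ^ 3 - a * b ^ 2 + 2 * b ^ 2 + 3 * b - a) * x ^ 2 +
       (a ^ 2 * b ^ 3 - a * b ^ 2 - 2 * b ^ 2 + 3 * b - a) * y ^ 2 - 4 * b) = 0 := by
  subst hx hy hz
  have hnorm {c : ℝ} (h₀ : 0 < c) (h₁ : c < 1) : ‖(c : ℂ)‖ < 1 := by
    rwa [norm_real, Real.norm_of_nonneg h₀.le]
  have hG : collisionPoly a b (z₁ + z₂) (z₁ * z₂) = 0 :=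
    collisionPoly_eq_zero_of_blaschke_eq (hnorm ha ha') (hnorm hb hb') hz₁ hz₂ hne
      (by simpa only [hB, blaschke] using heq)
  have hprod := two_ellipses_mul_pow_four_eq_zero (re_div_sum_mul_sum hz₁ hz₂ hsum)
    (im_div_sum_mul_I_mul_sum hz₁ hz₂ hsum) (by exact_mod_cast congrArg ofReal hab) hG
  exact_mod_cast (mul_eq_zero.mp hprod).resolve_right (pow_ne_zero 4 hsum)
end
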